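/- arXiv:2002.02601 — 2 statements merged into one kernel-verified Lean document; each statement's English description precedes it below -/
import Mathlib

section
/- Fix positive integers M, N, K, row supports ρ(k) ⊆ {1,…,M} and column supports γ(k) ⊆ {1,…,N} for k = 1,…,K, a real M×N matrix X, and positive weights λ₁,…,λ_K. Suppose k ≠ k' are module indices with ρ(k') ⊆ ρ(k) and γ(k') ⊆ γ(k), and suppose λ_{k'} ≥ λ_k. If a feasible K-tuple Ŝ = (Ŝ⁽¹⁾,…,Ŝ⁽ᴷ⁾) minimizes the BIDIFAC+ objective F over all feasible K-tuples, then the K-tuple S̃ defined by S̃⁽ᵏ'⁾ = 0, S̃⁽ᵏ⁾ = Ŝ⁽ᵏ⁾ + Ŝ⁽ᵏ'⁾, and S̃⁽ʲ⁾ = Ŝ⁽ʲ⁾ for j ∉ {k, k'}, is feasible and also minimizes F. In particular, there always exists a minimizer of F whose k'-th module is zero, so the condition λ_k > λ_{k'} is necessary to allow the nested module k' to be essentially nonzero. (Proposition 1, condition 1.) -/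
open Matrix BigOperators

/-- The nuclear norm of a real matrix: the sum of its singular values, i.e. the sum of
the square roots of the (nonnegative real) eigenvalues of `Aᵀ * A` (= `Aᴴ * A` over `ℝ`). -/
noncomputable def nuclearNorm {M N : ℕ} (A : Matrix (Fin M) (Fin N) ℝ) : ℝ :=
  ∑ i, Real.sqrt ((show (Aᵀ * A).IsHermitian by
    rw [← Matrix.conjTranspose_eq_transpose_of_trivial]
    exact Matrix.isHermitian_conjTranspose_mul_self A).eigenvalues i)

/-- Squared Frobenius norm: sum of squared entries. -/
noncomputable def frobSq {M N : ℕ} (A : Matrix (Fin M) (Fin N) ℝ) : ℝ :=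
  ∑ m, ∑ n, (A m n) ^ 2

/-- Feasibility of a `K`-tuple of matrices with respect to row supports `ρ` and
column supports `γ`: module `k` vanishes outside `ρ k × γ k`. -/
def Feasible {M N K : ℕ} (ρ : Fin K → Finset (Fin M)) (γ : Fin K → Finset (Fin N))
    (S : Fin K → Matrix (Fin M) (Fin N) ℝ) : Prop :=
  ∀ k m n, m ∉ ρ k ∨ n ∉ γ k → S k m n = 0

/-- The BIDIFAC+ objective. -/
noncomputable def bidifacObj {M N K : ℕ} (X : Matrix (Fin M) (Fin N) ℝ)
    (lam : Fin K → ℝ) (S : Fin K → Matrix (Fin M) (Fin N) ℝ) : ℝ :=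
  (1 / 2) * frobSq (X - ∑ k, S k) + ∑ k, lam k * nuclearNorm (S k)

/-! Merging module `k'` into module `k` keeps the tuple feasible, because the support of `k'` is
nested in that of `k`, and leaves `∑ⱼ S⁽ʲ⁾`, hence the data-fit term, unchanged. By the triangle
inequality for the nuclear norm and `λ_k ≤ λ_{k'}` the penalty can only decrease, so the merged
tuple is again a minimizer. The triangle inequality follows from the variational bound
`∑ⱼ ⟪pⱼ, A qⱼ⟫ ≤ ‖A‖_*` over pairs of orthonormal families, which is attained by the singular
vectors of `A`. -/

open RealInnerProductSpace

theorem Orthonormal.sqrt_sum_inner_sq_le {ι E : Type*} [Fintype ι] [NormedAddCommGroup E]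
    [InnerProductSpace ℝ E] {v : ι → E} (hv : Orthonormal ℝ v) (x : E) :
    √(∑ i, ⟪v i, x⟫ ^ 2) ≤ ‖x‖ := by
  have bessel := hv.sum_inner_products_le (s := Finset.univ) x
  simp only [Real.norm_eq_abs, sq_abs] at bessel
  exact (Real.sqrt_le_sqrt bessel).trans_eq (Real.sqrt_sq (norm_nonneg x))

theorem Matrix.isHermitian_transpose_mul_self {m n : Type*} [Fintype m]
    (A : Matrix m n ℝ) : (Aᵀ * A).IsHermitian := by
  rw [← conjTranspose_eq_transpose_of_trivial]
  exact isHermitian_conjTranspose_mul_self A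

namespace Matrix

variable {m n : ℕ} (A : Matrix (Fin m) (Fin n) ℝ)

theorem inner_toEuclideanLin_eigenvectorBasis (i j : Fin n) :
    ⟪toEuclideanLin A ((isHermitian_transpose_mul_self A).eigenvectorBasis i),
      toEuclideanLin A ((isHermitian_transpose_mul_self A).eigenvectorBasis j)⟫
      = if i = j then (isHermitian_transpose_mul_self A).eigenvalues j else 0 := by
  set hA := isHermitian_transpose_mul_self A
  have h_eigen : toEuclideanLin Aᴴ (toEuclideanLin A (hA.eigenvectorBasis j))
      = hA.eigenvalues j • hA.eigenvectorBasis j := by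
    apply (WithLp.equiv 2 (Fin n → ℝ)).injective
    simpa [toLpLin_apply, mulVec_mulVec] using hA.mulVec_eigenvectorBasis j
  rw [← LinearMap.adjoint_inner_right, ← toEuclideanLin_conjTranspose_eq_adjoint, h_eigen,
    real_inner_smul_right, orthonormal_iff_ite.mp hA.eigenvectorBasis.orthonormal]
  split_ifs <;> simp_all

theorem norm_toEuclideanLin_eigenvectorBasis (i : Fin n) :
    ‖toEuclideanLin A ((isHermitian_transpose_mul_self A).eigenvectorBasis i)‖
      = √((isHermitian_transpose_mul_self A).eigenvalues i) := by
  have h := inner_toEuclideanLin_eigenvectorBasis A i i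
  rw [if_pos rfl, real_inner_self_eq_norm_sq] at h
  rw [← h, Real.sqrt_sq (norm_nonneg _)]

theorem nuclearNorm_eq_sum_norm_toEuclideanLin_eigenvectorBasis :
    nuclearNorm A
      = ∑ i, ‖toEuclideanLin A ((isHermitian_transpose_mul_self A).eigenvectorBasis i)‖ := by
  simp only [norm_toEuclideanLin_eigenvectorBasis]
  rfl

theorem sum_inner_toEuclideanLin_le_nuclearNorm {ι : Type*} [Fintype ι]
    {p : ι → EuclideanSpace ℝ (Fin m)} {q : ι → EuclideanSpace ℝ (Fin n)}
    (hp : Orthonormal ℝ p) (hq : Orthonormal ℝ q) :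
    ∑ j, ⟪p j, toEuclideanLin A (q j)⟫ ≤ nuclearNorm A := by
  set v := (isHermitian_transpose_mul_self A).eigenvectorBasis
  have expand (j : ι) : ⟪p j, toEuclideanLin A (q j)⟫
      = ∑ i, ⟪q j, v i⟫ * ⟪p j, toEuclideanLin A (v i)⟫ := by
    conv_lhs => rw [← v.sum_repr' (q j)]
    simp only [map_sum, map_smul, inner_sum, real_inner_smul_right, real_inner_comm (q j)]
  calc ∑ j, ⟪p j, toEuclideanLin A (q j)⟫
      = ∑ i, ∑ j, ⟪q j, v i⟫ * ⟪p j, toEuclideanLin A (v i)⟫ := by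
        simp_rw [expand]; exact Finset.sum_comm
    _ ≤ ∑ i, √(∑ j, ⟪q j, v i⟫ ^ 2) * √(∑ j, ⟪p j, toEuclideanLin A (v i)⟫ ^ 2) :=
        Finset.sum_le_sum fun i _ => Real.sum_mul_le_sqrt_mul_sqrt _ _ _
    _ ≤ ∑ i, ‖v i‖ * ‖toEuclideanLin A (v i)‖ := by
        gcongr with i
        exacts [hq.sqrt_sum_inner_sq_le _, hp.sqrt_sum_inner_sq_le _]
    _ = nuclearNorm A := by
        simp [v.orthonormal.1, nuclearNorm_eq_sum_norm_toEuclideanLin_eigenvectorBasis, v]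

theorem exists_orthonormal_sum_inner_toEuclideanLin_eq_nuclearNorm :
    ∃ (ι : Type) (_ : Fintype ι) (p : ι → EuclideanSpace ℝ (Fin m))
      (q : ι → EuclideanSpace ℝ (Fin n)), Orthonormal ℝ p ∧ Orthonormal ℝ q ∧
      ∑ j, ⟪p j, toEuclideanLin A (q j)⟫ = nuclearNorm A := by
  classical
  rw [nuclearNorm_eq_sum_norm_toEuclideanLin_eigenvectorBasis]
  set v := (isHermitian_transpose_mul_self A).eigenvectorBasis
  let s : Set (Fin n) := {i | toEuclideanLin A (v i) ≠ 0}
  refine ⟨s, inferInstance, fun i => ‖toEuclideanLin A (v i)‖⁻¹ • toEuclideanLin A (v i),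
    fun i => v i, ⟨fun i => norm_smul_inv_norm i.2, fun i j hij => ?_⟩,
    v.orthonormal.comp _ Subtype.val_injective, ?_⟩
  · simp only [real_inner_smul_left, real_inner_smul_right, v,
      inner_toEuclideanLin_eigenvectorBasis, if_neg (Subtype.val_injective.ne hij), mul_zero]
  · symm
    refine Finset.sum_congr_set s _ _ (fun i hi => ?_)
      (fun i hi => norm_eq_zero.2 (not_not.1 hi))
    have : ‖toEuclideanLin A (v i)‖ ≠ 0 := norm_ne_zero_iff.2 hi
    rw [real_inner_smul_left, real_inner_self_eq_norm_sq]
    field_simp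

theorem nuclearNorm_add_le (B : Matrix (Fin m) (Fin n) ℝ) :
    nuclearNorm (A + B) ≤ nuclearNorm A + nuclearNorm B := by
  obtain ⟨ι, _, p, q, hp, hq, h⟩ :=
    exists_orthonormal_sum_inner_toEuclideanLin_eq_nuclearNorm (A + B)
  calc nuclearNorm (A + B)
      = ∑ j, ⟪p j, toEuclideanLin A (q j)⟫ + ∑ j, ⟪p j, toEuclideanLin B (q j)⟫ := by
        simp only [← h, map_add, LinearMap.add_apply, inner_add_right, Finset.sum_add_distrib]
    _ ≤ nuclearNorm A + nuclearNorm B :=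
        add_le_add (sum_inner_toEuclideanLin_le_nuclearNorm A hp hq)
          (sum_inner_toEuclideanLin_le_nuclearNorm B hp hq)

theorem nuclearNorm_nonneg : 0 ≤ nuclearNorm A := by
  rw [nuclearNorm_eq_sum_norm_toEuclideanLin_eigenvectorBasis]
  positivity

@[simp]
theorem nuclearNorm_zero : nuclearNorm (0 : Matrix (Fin m) (Fin n) ℝ) = 0 := by
  simp [nuclearNorm_eq_sum_norm_toEuclideanLin_eigenvectorBasis]

end Matrix

section MergeModule

variable {ι α : Type*} [DecidableEq ι]

def mergeModule [Add α] [Zero α] (S : ι → α) (k k' : ι) : ι → α :=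
  fun j => if j = k' then 0 else if j = k then S k + S k' else S j

theorem sum_mergeModule [Fintype ι] [AddCommGroup α] (S : ι → α) {k k' : ι} (hkk' : k ≠ k') :
    ∑ j, mergeModule S k k' j = ∑ j, S j := by
  have shift (j : ι) :
      mergeModule S k k' j
        = S j + (Pi.single k (S k') : ι → α) j - (Pi.single k' (S k') : ι → α) j := by
    unfold mergeModule
    rcases eq_or_ne j k' with rfl | hjk' <;> rcases eq_or_ne j k with rfl | hjk <;> simp_all
  simp [shift, Finset.sum_add_distrib, Finset.sum_sub_distrib]

theorem feasible_mergeModule {M N K : ℕ} {ρ : Fin K → Finset (Fin M)}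
    {γ : Fin K → Finset (Fin N)} {S : Fin K → Matrix (Fin M) (Fin N) ℝ} (hS : Feasible ρ γ S)
    {k k' : Fin K} (hρ : ρ k' ⊆ ρ k) (hγ : γ k' ⊆ γ k) : Feasible ρ γ (mergeModule S k k') := by
  intro j m n hmn
  unfold mergeModule
  split_ifs with hjk' hjk
  · rfl
  · subst hjk
    have hmn' : m ∉ ρ k' ∨ n ∉ γ k' := hmn.imp (fun h hm => h (hρ hm)) (fun h hn => h (hγ hn))
    rw [Matrix.add_apply, hS j m n hmn, hS k' m n hmn', add_zero]
  · exact hS j m n hmn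

theorem sum_mul_nuclearNorm_mergeModule_le [Fintype ι] {M N : ℕ}
    (S : ι → Matrix (Fin M) (Fin N) ℝ) (lam : ι → ℝ) {k k' : ι} (hk : 0 ≤ lam k)
    (hl : lam k ≤ lam k') :
    ∑ j, lam j * nuclearNorm (mergeModule S k k' j) ≤ ∑ j, lam j * nuclearNorm (S j) := by
  -- Pointwise comparison: the penalty `c` freed at `k'` pays for the growth at `k`.
  set c := lam k' * nuclearNorm (S k')
  have shift (j : ι) : lam j * nuclearNorm (mergeModule S k k' j)
      ≤ lam j * nuclearNorm (S j) + (Pi.single k c : ι → ℝ) j - (Pi.single k' c : ι → ℝ) j := by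
    unfold mergeModule
    rcases eq_or_ne j k' with rfl | hjk'
    · rcases eq_or_ne j k with rfl | hjk
      · simpa using mul_nonneg hk (nuclearNorm_nonneg _)
      · simp [hjk, c]
    rcases eq_or_ne j k with rfl | hjk
    · simp only [if_neg hjk', if_true, Pi.single_eq_same, Pi.single_eq_of_ne hjk', sub_zero]
      calc lam j * nuclearNorm (S j + S k')
          ≤ lam j * (nuclearNorm (S j) + nuclearNorm (S k')) :=
            mul_le_mul_of_nonneg_left (nuclearNorm_add_le _ _) hk
        _ ≤ lam j * nuclearNorm (S j) + c := by
            linarith [mul_le_mul_of_nonneg_right hl (nuclearNorm_nonneg (S k'))]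
    · simp [hjk, hjk']
  calc ∑ j, lam j * nuclearNorm (mergeModule S k k' j)
      ≤ ∑ j, (lam j * nuclearNorm (S j)
          + (Pi.single k c : ι → ℝ) j - (Pi.single k' c : ι → ℝ) j) :=
        Finset.sum_le_sum fun j _ => shift j
    _ = ∑ j, lam j * nuclearNorm (S j) := by
        simp [Finset.sum_add_distrib, Finset.sum_sub_distrib]

theorem bidifacObj_mergeModule_le {M N K : ℕ} (X : Matrix (Fin M) (Fin N) ℝ) (lam : Fin K → ℝ)
    (S : Fin K → Matrix (Fin M) (Fin N) ℝ) {k k' : Fin K} (hkk' : k ≠ k') (hk : 0 ≤ lam k)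
    (hl : lam k ≤ lam k') :
    bidifacObj X lam (mergeModule S k k') ≤ bidifacObj X lam S := by
  have penalty_le := sum_mul_nuclearNorm_mergeModule_le S lam hk hl
  unfold bidifacObj
  rw [sum_mergeModule S hkk']
  linarith

end MergeModule

theorem bidifac_nested_module_can_be_zeroed_general
    {M N K : ℕ}
    (ρ : Fin K → Finset (Fin M)) (γ : Fin K → Finset (Fin N))
    (X : Matrix (Fin M) (Fin N) ℝ) (lam : Fin K → ℝ) (hlam : ∀ k, 0 < lam k)
    (k k' : Fin K) (hkk' : k ≠ k')
    (hρ : ρ k' ⊆ ρ k) (hγ : γ k' ⊆ γ k) (hl : lam k ≤ lam k')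
    (Shat : Fin K → Matrix (Fin M) (Fin N) ℝ)
    (hfeas : Feasible ρ γ Shat)
    (hmin : ∀ T, Feasible ρ γ T → bidifacObj X lam Shat ≤ bidifacObj X lam T) :
    Feasible ρ γ (fun j => if j = k' then 0 else if j = k then Shat k + Shat k' else Shat j) ∧
    ∀ T, Feasible ρ γ T →
      bidifacObj X lam (fun j => if j = k' then 0 else if j = k then Shat k + Shat k' else Shat j)
        ≤ bidifacObj X lam T := by
  have merge_le : bidifacObj X lam (mergeModule Shat k k') ≤ bidifacObj X lam Shat :=
    bidifacObj_mergeModule_le X lam Shat hkk' (hlam k).le hl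
  exact ⟨feasible_mergeModule hfeas hρ hγ, fun T hT => merge_le.trans (hmin T hT)⟩

/-- Proposition 1, condition 1: if module `k'` is nested in module `k` and
`λ k ≤ λ k'`, then moving the `k'`-th module into the `k`-th module of any minimizer
yields another feasible minimizer, whose `k'`-th module is zero. -/
theorem bidifac_nested_module_can_be_zeroed
    {M N K : ℕ} (hM : 0 < M) (hN : 0 < N) (hK : 0 < K)
    (ρ : Fin K → Finset (Fin M)) (γ : Fin K → Finset (Fin N))
    (X : Matrix (Fin M) (Fin N) ℝ) (lam : Fin K → ℝ) (hlam : ∀ k, 0 < lam k)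
    (k k' : Fin K) (hkk' : k ≠ k')
    (hρ : ρ k' ⊆ ρ k) (hγ : γ k' ⊆ γ k) (hl : lam k ≤ lam k')
    (Shat : Fin K → Matrix (Fin M) (Fin N) ℝ)
    (hfeas : Feasible ρ γ Shat)
    (hmin : ∀ T, Feasible ρ γ T → bidifacObj X lam Shat ≤ bidifacObj X lam T) :
    Feasible ρ γ (fun j => if j = k' then 0 else if j = k then Shat k + Shat k' else Shat j) ∧
    ∀ T, Feasible ρ γ T →
      bidifacObj X lam (fun j => if j = k' then 0 else if j = k then Shat k + Shat k' else Shat j)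
        ≤ bidifacObj X lam T :=
  bidifac_nested_module_can_be_zeroed_general ρ γ X lam hlam k k' hkk' hρ hγ hl Shat hfeas hmin
end

section
/- Fix finite row supports ρ(k) ⊆ {1,…,M} and column supports γ(k) ⊆ {1,…,N} for module indices k, all nonempty, and set λₖ = √|ρ(k)| + √|γ(k)|. Let k be a module index and I a nonempty set of module indices with k ∉ I such that (ρ(j), γ(j)) ≠ (ρ(k), γ(k)) for every j ∈ I. Suppose there are positive integers r and c such that for every row index m, the number of j ∈ I with m ∈ ρ(j) equals r if m ∈ ρ(k) and 0 otherwise, and for every column index n, the number of j ∈ I with n ∈ γ(j) equals c if n ∈ γ(k) and 0 otherwise. Then λ_k < ∑_{j∈I} λ_j. (Proposition 4, condition 2: the dimension-based penalty weights satisfy the second necessary condition of Proposition 1.) -/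
open BigOperators

lemma dwc_sqrt_add_le (x y : ℝ) (hx : 0 ≤ x) (hy : 0 ≤ y) :
    Real.sqrt (x + y) ≤ Real.sqrt x + Real.sqrt y := by
  rw [Real.sqrt_le_iff]
  refine ⟨by positivity, ?_⟩
  have h1 := Real.sq_sqrt hx
  have h2 := Real.sq_sqrt hy
  have h3 := Real.sqrt_nonneg x
  have h4 := Real.sqrt_nonneg y
  nlinarith

lemma dwc_sqrt_sum_le {α : Type*} (s : Finset α) (a : α → ℝ) (ha : ∀ j ∈ s, 0 ≤ a j) :
    Real.sqrt (∑ j ∈ s, a j) ≤ ∑ j ∈ s, Real.sqrt (a j) := by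
  classical
  induction s using Finset.induction_on with
  | empty => simp
  | @insert x t hx ih =>
    rw [Finset.sum_insert hx, Finset.sum_insert hx]
    have hx0 : 0 ≤ a x := ha x (Finset.mem_insert_self _ _)
    have ht0 : 0 ≤ ∑ j ∈ t, a j :=
      Finset.sum_nonneg fun j hj => ha j (Finset.mem_insert_of_mem hj)
    have h1 := dwc_sqrt_add_le (a x) (∑ j ∈ t, a j) hx0 ht0
    have h2 := ih (fun j hj => ha j (Finset.mem_insert_of_mem hj))
    linarith

lemma dwc_sqrt_strict {α : Type*} [DecidableEq α] (s : Finset α) (a : α → ℝ)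
    (h1 : ∀ j ∈ s, 1 ≤ a j) (h2 : 2 ≤ s.card) (b : ℝ) (hb : b ≤ ∑ j ∈ s, a j) :
    Real.sqrt b < ∑ j ∈ s, Real.sqrt (a j) := by
  obtain ⟨j0, hj0⟩ : s.Nonempty := Finset.card_pos.mp (by omega)
  have herase : (s.erase j0).Nonempty := by
    rw [← Finset.card_pos, Finset.card_erase_of_mem hj0]; omega
  set S := ∑ j ∈ s.erase j0, a j with hS
  have hSpos : 0 < S := by
    obtain ⟨j1, hj1⟩ := herase
    have h1' : 1 ≤ S := le_trans (h1 j1 (Finset.mem_of_mem_erase hj1))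
      (Finset.single_le_sum
        (fun j hj => le_trans zero_le_one (h1 j (Finset.mem_of_mem_erase hj))) hj1)
    linarith
  have ha0 : 0 < a j0 := lt_of_lt_of_le one_pos (h1 j0 hj0)
  have hsum : ∑ j ∈ s, a j = a j0 + S := (Finset.add_sum_erase _ _ hj0).symm
  have key : Real.sqrt (a j0 + S) < Real.sqrt (a j0) + Real.sqrt S := by
    rw [Real.sqrt_lt' (by positivity)]
    have e1 := Real.sq_sqrt ha0.le
    have e2 := Real.sq_sqrt hSpos.le
    have p1 : 0 < Real.sqrt (a j0) := Real.sqrt_pos.mpr ha0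
    have p2 : 0 < Real.sqrt S := Real.sqrt_pos.mpr hSpos
    nlinarith
  have hrest : Real.sqrt S ≤ ∑ j ∈ s.erase j0, Real.sqrt (a j) :=
    dwc_sqrt_sum_le _ _ (fun j hj =>
      le_trans zero_le_one (h1 j (Finset.mem_of_mem_erase hj)))
  have hmono : Real.sqrt b ≤ Real.sqrt (a j0 + S) :=
    Real.sqrt_le_sqrt (by rw [← hsum]; exact hb)
  calc Real.sqrt b ≤ Real.sqrt (a j0 + S) := hmono
    _ < Real.sqrt (a j0) + Real.sqrt S := key
    _ ≤ Real.sqrt (a j0) + ∑ j ∈ s.erase j0, Real.sqrt (a j) := by linarith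
    _ = ∑ j ∈ s, Real.sqrt (a j) := Finset.add_sum_erase s (fun j => Real.sqrt (a j)) hj0

/-- Double counting over a fintype. -/
lemma dwc_double_count {α K : Type*} [Fintype α] [DecidableEq α] (σ : K → Finset α)
    (τ : Finset α) (I : Finset K) (r : ℕ)
    (h : ∀ m : α, (I.filter fun j => m ∈ σ j).card = if m ∈ τ then r else 0) :
    ∑ j ∈ I, (σ j).card = r * τ.card := by
  classical
  calc ∑ j ∈ I, (σ j).card
      = ∑ j ∈ I, ∑ m : α, (if m ∈ σ j then 1 else 0) := by
        refine Finset.sum_congr rfl fun j _ => ?_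
        rw [← Finset.card_filter]
        congr 1
        ext m; simp
    _ = ∑ m : α, ∑ j ∈ I, (if m ∈ σ j then 1 else 0) := Finset.sum_comm
    _ = ∑ m : α, (I.filter fun j => m ∈ σ j).card := by
        simp_rw [Finset.card_filter]
    _ = ∑ m : α, (if m ∈ τ then r else 0) := by simp_rw [h]
    _ = r * τ.card := by
        rw [Finset.sum_ite_mem, Finset.univ_inter, Finset.sum_const, smul_eq_mul, mul_comm]

/-- Proposition 4, condition 2: with the dimension-based penalty weights
`λₖ = √|ρ(k)| + √|γ(k)|` and nonempty supports, if a collection `I` of modules (each distinct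
from module `k` as a pair of supports) covers the rows of module `k` exactly `r` times and the
columns exactly `c` times (and covers nothing outside module `k`), then
`λ k < ∑_{j ∈ I} λ j`. -/
theorem dimension_weights_cover_strict
    {M N K : ℕ}
    (ρ : Fin K → Finset (Fin M)) (γ : Fin K → Finset (Fin N))
    (hρne : ∀ k, (ρ k).Nonempty) (hγne : ∀ k, (γ k).Nonempty)
    (k : Fin K) (I : Finset (Fin K)) (hIne : I.Nonempty) (hkI : k ∉ I)
    (hdist : ∀ j ∈ I, (ρ j, γ j) ≠ (ρ k, γ k))
    (r c : ℕ) (hr : 0 < r) (hc : 0 < c)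
    (hrow : ∀ m : Fin M,
      (I.filter fun j => m ∈ ρ j).card = if m ∈ ρ k then r else 0)
    (hcol : ∀ n : Fin N,
      (I.filter fun j => n ∈ γ j).card = if n ∈ γ k then c else 0) :
    Real.sqrt ((ρ k).card) + Real.sqrt ((γ k).card)
      < ∑ j ∈ I, (Real.sqrt ((ρ j).card) + Real.sqrt ((γ j).card)) := by
  classical
  -- supports in I are inside the support of k
  have hsubρ : ∀ j ∈ I, ρ j ⊆ ρ k := by
    intro j hj m hm
    by_contra h
    have h0 := hrow m
    rw [if_neg h, Finset.card_eq_zero] at h0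
    exact absurd h0 (Finset.nonempty_iff_ne_empty.mp ⟨j, Finset.mem_filter.mpr ⟨hj, hm⟩⟩)
  have hsubγ : ∀ j ∈ I, γ j ⊆ γ k := by
    intro j hj n hn
    by_contra h
    have h0 := hcol n
    rw [if_neg h, Finset.card_eq_zero] at h0
    exact absurd h0 (Finset.nonempty_iff_ne_empty.mp ⟨j, Finset.mem_filter.mpr ⟨hj, hn⟩⟩)
  -- double counting
  have hdρ : ∑ j ∈ I, (ρ j).card = r * (ρ k).card := dwc_double_count ρ (ρ k) I r hrow
  have hdγ : ∑ j ∈ I, (γ j).card = c * (γ k).card := dwc_double_count γ (γ k) I c hcol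
  -- I has at least two elements
  have hI2 : 2 ≤ I.card := by
    by_contra h
    have h1 : I.card = 1 := by
      have := Finset.card_pos.mpr hIne; omega
    obtain ⟨j, hj⟩ := Finset.card_eq_one.mp h1
    have hjI : j ∈ I := by rw [hj]; exact Finset.mem_singleton_self j
    have hρeq : ρ j = ρ k := by
      refine Finset.Subset.antisymm (hsubρ j hjI) fun m hm => ?_
      by_contra hmj
      have h0 := hrow m
      rw [if_pos hm, hj, Finset.filter_singleton, if_neg hmj] at h0
      simp at h0
      omega
    have hγeq : γ j = γ k := by
      refine Finset.Subset.antisymm (hsubγ j hjI) fun n hn => ?_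
      by_contra hnj
      have h0 := hcol n
      rw [if_pos hn, hj, Finset.filter_singleton, if_neg hnj] at h0
      simp at h0
      omega
    exact hdist j hjI (by rw [hρeq, hγeq])
  -- row part
  have hrowlt : Real.sqrt ((ρ k).card) < ∑ j ∈ I, Real.sqrt ((ρ j).card) := by
    refine dwc_sqrt_strict I (fun j => ((ρ j).card : ℝ)) ?_ hI2 _ ?_
    · intro j _
      show (1 : ℝ) ≤ ((ρ j).card : ℝ)
      exact_mod_cast Finset.card_pos.mpr (hρne j)
    · have : ((ρ k).card : ℝ) ≤ (r : ℝ) * (ρ k).card := by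
        have : (1 : ℝ) ≤ (r : ℝ) := by exact_mod_cast hr
        nlinarith [show (0:ℝ) ≤ ((ρ k).card : ℝ) from Nat.cast_nonneg _]
      calc ((ρ k).card : ℝ) ≤ (r : ℝ) * (ρ k).card := this
        _ = ∑ j ∈ I, ((ρ j).card : ℝ) := by exact_mod_cast congrArg (Nat.cast (R := ℝ)) hdρ.symm
  have hcollt : Real.sqrt ((γ k).card) < ∑ j ∈ I, Real.sqrt ((γ j).card) := by
    refine dwc_sqrt_strict I (fun j => ((γ j).card : ℝ)) ?_ hI2 _ ?_
    · intro j _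
      show (1 : ℝ) ≤ ((γ j).card : ℝ)
      exact_mod_cast Finset.card_pos.mpr (hγne j)
    · have : ((γ k).card : ℝ) ≤ (c : ℝ) * (γ k).card := by
        have : (1 : ℝ) ≤ (c : ℝ) := by exact_mod_cast hc
        nlinarith [show (0:ℝ) ≤ ((γ k).card : ℝ) from Nat.cast_nonneg _]
      calc ((γ k).card : ℝ) ≤ (c : ℝ) * (γ k).card := this
        _ = ∑ j ∈ I, ((γ j).card : ℝ) := by exact_mod_cast congrArg (Nat.cast (R := ℝ)) hdγ.symm
  rw [Finset.sum_add_distrib]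
  exact add_lt_add hrowlt hcollt
end
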